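/- arXiv:1706.08855 — 7 statements merged into one kernel-verified Lean document; each statement's English description precedes it below -/
import Mathlib

section
/- Let L1 and L2 be regular languages over a finite alphabet Σ. Then there exist n ∈ ℕ and regular languages N_1, …, N_n and M_1, …, M_n with N_i ⊆ L1 and M_i ⊆ L2 for every i, such that L1 ⊙ L2 = ⋃_{i=1}^n N_i · M_i (where N_i · M_i is the concatenation of languages). -/
/-!
A factorisation `u = x ++ y` with `x ∈ L₁` and `y ∈ L₂` is the only one exactly when `x` has no
proper prefix `x'` in `L₁` whose remainder `a` (with `x = x' ++ a`) satisfies `a ++ y ∈ L₂`, and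
`y` has no nonempty prefix `c` with `x ++ c ∈ L₁` and the rest of `y` in `L₂`. The first condition
sees `y` only through its right quotient `R = {v | v ++ y ∈ L₂}`, the second sees `x` only through
its left quotient `K = {v | x ++ v ∈ L₁}`. Fixing the pair `(K, R)` decouples the two factors, each
constraint becoming a regular condition on one factor, and by Myhill–Nerode only finitely many
pairs occur.
-/

/-- The unambiguous concatenation `L1 ⊙ L2`: words `u` admitting exactly one
pair `(u1, u2)` with `u = u1 ++ u2`, `u1 ∈ L1` and `u2 ∈ L2`. -/
def UnambiguousConcat {α : Type} (L1 L2 : Language α) : Language α :=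
  {u | ∃! p : List α × List α, p.1 ++ p.2 = u ∧ p.1 ∈ L1 ∧ p.2 ∈ L2}

namespace Language

section

variable {α : Type*} {L L₁ L₂ : Language α}

def rightQuotient (L : Language α) (y : List α) : Language α := {x | x ++ y ∈ L}

@[simp]
theorem mem_rightQuotient (x y : List α) : x ∈ L.rightQuotient y ↔ x ++ y ∈ L := Iff.rfl

theorem rightQuotient_eq_reverse_leftQuotient_reverse (L : Language α) (y : List α) :
    L.rightQuotient y = (L.reverse.leftQuotient y.reverse).reverse := by
  ext x
  simp [mem_reverse, ← List.reverse_append]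

theorem IsRegular.leftQuotient (h : L.IsRegular) (x : List α) : (L.leftQuotient x).IsRegular :=
  .of_finite_range_leftQuotient <| h.finite_range_leftQuotient.subset <| by
    rintro _ ⟨y, rfl⟩
    exact ⟨x ++ y, leftQuotient_append L x y⟩

theorem IsRegular.rightQuotient (h : L.IsRegular) (y : List α) : (L.rightQuotient y).IsRegular := by
  rw [rightQuotient_eq_reverse_leftQuotient_reverse]
  exact (h.reverse.leftQuotient _).reverse

theorem IsRegular.finite_range_rightQuotient (h : L.IsRegular) :
    (Set.range L.rightQuotient).Finite :=
  (h.reverse.finite_range_leftQuotient.image reverse).subset <| by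
    rintro _ ⟨y, rfl⟩
    exact ⟨_, ⟨y.reverse, rfl⟩, (rightQuotient_eq_reverse_leftQuotient_reverse L y).symm⟩

theorem IsRegular.setOf_leftQuotient_eq (h : L.IsRegular) (K : Language α) :
    IsRegular ({x | L.leftQuotient x = K} : Language α) :=
  .of_finite_range_leftQuotient <|
    (h.finite_range_leftQuotient.image fun L' ↦
      ({y | L'.leftQuotient y = K} : Language α)).subset <| by
    rintro _ ⟨x, rfl⟩
    refine ⟨L.leftQuotient x, ⟨x, rfl⟩, ext fun y ↦ ?_⟩
    show (L.leftQuotient x).leftQuotient y = K ↔ L.leftQuotient (x ++ y) = K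
    rw [leftQuotient_append]

theorem IsRegular.setOf_rightQuotient_eq (h : L.IsRegular) (R : Language α) :
    IsRegular ({y | L.rightQuotient y = R} : Language α) := by
  have : ({y | L.rightQuotient y = R} : Language α) =
      reverse {x | L.reverse.leftQuotient x = R.reverse} := by
    ext y
    show L.rightQuotient y = R ↔ L.reverse.leftQuotient y.reverse = R.reverse
    rw [rightQuotient_eq_reverse_leftQuotient_reverse, reverse_involutive.eq_iff]
  rw [this]
  exact (h.reverse.setOf_leftQuotient_eq R.reverse).reverse

theorem isRegular_one : (1 : Language α).IsRegular :=
  .of_finite_range_leftQuotient <| (Set.toFinite {1, 0}).subset <| by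
    rintro _ ⟨_ | ⟨a, x⟩, rfl⟩
    · exact Or.inl rfl
    · refine Or.inr (ext fun y ↦ ?_)
      simp [mem_one, notMem_zero]

theorem leftQuotient_mul (L₁ L₂ : Language α) (w : List α) :
    (L₁ * L₂).leftQuotient w =
      L₁.leftQuotient w * L₂ + sSup (L₂.leftQuotient '' {v | ∃ u ∈ L₁, u ++ v = w}) := by
  ext y
  simp only [mem_leftQuotient, mem_add, mem_mul, sSup_image, mem_iSup]
  constructor
  · rintro ⟨a, ha, b, hb, hab⟩
    rcases List.append_eq_append_iff.1 hab with ⟨v, rfl, rfl⟩ | ⟨c, rfl, rfl⟩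
    · exact Or.inr ⟨v, ⟨a, ha, rfl⟩, hb⟩
    · exact Or.inl ⟨c, ha, b, hb, rfl⟩
  · rintro (⟨c, hc, b, hb, rfl⟩ | ⟨v, ⟨u, hu, rfl⟩, hv⟩)
    · exact ⟨w ++ c, hc, b, hb, List.append_assoc ..⟩
    · exact ⟨u, hu, v ++ y, hv, (List.append_assoc ..).symm⟩

theorem IsRegular.mul (h₁ : L₁.IsRegular) (h₂ : L₂.IsRegular) : (L₁ * L₂).IsRegular :=
  .of_finite_range_leftQuotient <|
    ((h₁.finite_range_leftQuotient.prod h₂.finite_range_leftQuotient.finite_subsets).image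
      fun p ↦ p.1 * L₂ + sSup p.2).subset <| by
    rintro _ ⟨w, rfl⟩
    exact ⟨(L₁.leftQuotient w, L₂.leftQuotient '' _), ⟨⟨w, rfl⟩, Set.image_subset_range _ _⟩,
      (leftQuotient_mul L₁ L₂ w).symm⟩

end

section

variable {α : Type} {L₁ L₂ K R : Language α}

theorem mem_unambiguousConcat_iff {u : List α} :
    u ∈ UnambiguousConcat L₁ L₂ ↔ ∃ x ∈ L₁, ∃ y ∈ L₂, x ++ y = u ∧
      x ∉ L₁ * (L₂.rightQuotient y ⊓ 1ᶜ) ∧ y ∉ (L₁.leftQuotient x ⊓ 1ᶜ) * L₂ := by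
  constructor
  · rintro ⟨⟨x, y⟩, ⟨rfl, hx, hy⟩, huniq⟩
    refine ⟨x, hx, y, hy, rfl, ?_, ?_⟩
    · rintro ⟨x', hx', a, ⟨hay, ha⟩, rfl⟩
      have := congrArg Prod.fst (huniq (x', a ++ y) ⟨(List.append_assoc x' a y).symm, hx', hay⟩)
      exact ha ((mem_one a).2 (by simpa using this))
    · rintro ⟨c, ⟨hxc, hc⟩, y', hy', rfl⟩
      have := congrArg Prod.fst (huniq (x ++ c, y') ⟨List.append_assoc x c y', hxc, hy'⟩)
      exact hc ((mem_one c).2 (by simpa using this))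
  · rintro ⟨x, hx, y, hy, rfl, hxy, hyx⟩
    refine ⟨(x, y), ⟨rfl, hx, hy⟩, ?_⟩
    rintro ⟨x', y'⟩ ⟨hxy', hx', hy'⟩
    rcases List.append_eq_append_iff.1 hxy' with ⟨a, rfl, rfl⟩ | ⟨c, rfl, rfl⟩
    · rcases eq_or_ne a [] with rfl | ha
      · simp
      · exact (hxy ⟨x', hx', a, ⟨hy', ha⟩, rfl⟩).elim
    · rcases eq_or_ne c [] with rfl | hc
      · simp
      · exact (hyx ⟨c, ⟨hx', hc⟩, y', hy', rfl⟩).elim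

def unambiguousConcatLeft (L₁ K R : Language α) : Language α :=
  {x | L₁.leftQuotient x = K} ⊓ L₁ ⊓ (L₁ * (R ⊓ 1ᶜ))ᶜ

def unambiguousConcatRight (L₂ K R : Language α) : Language α :=
  {y | L₂.rightQuotient y = R} ⊓ L₂ ⊓ ((K ⊓ 1ᶜ) * L₂)ᶜ

theorem unambiguousConcatLeft_le (K R : Language α) : unambiguousConcatLeft L₁ K R ≤ L₁ :=
  fun _ hx ↦ hx.1.2

theorem unambiguousConcatRight_le (K R : Language α) : unambiguousConcatRight L₂ K R ≤ L₂ :=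
  fun _ hy ↦ hy.1.2

theorem unambiguousConcat_eq_iUnion (L₁ L₂ : Language α) :
    UnambiguousConcat L₁ L₂ =
      ⋃ i : Set.range L₁.leftQuotient × Set.range L₂.rightQuotient,
        (unambiguousConcatLeft L₁ i.1 i.2 * unambiguousConcatRight L₂ i.1 i.2 : Language α) := by
  ext u
  refine mem_unambiguousConcat_iff.trans (Iff.trans ?_ Set.mem_iUnion.symm)
  constructor
  · rintro ⟨x, hx, y, hy, rfl, hxy, hyx⟩
    exact ⟨(⟨_, x, rfl⟩, ⟨_, y, rfl⟩), append_mem_mul ⟨⟨rfl, hx⟩, hxy⟩ ⟨⟨rfl, hy⟩, hyx⟩⟩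
  · rintro ⟨⟨⟨K, _⟩, ⟨R, _⟩⟩, x, ⟨⟨hK, hx⟩, hxy⟩, y, ⟨⟨hR, hy⟩, hyx⟩, rfl⟩
    obtain rfl : L₁.leftQuotient x = K := hK
    obtain rfl : L₂.rightQuotient y = R := hR
    exact ⟨x, hx, y, hy, rfl, hxy, hyx⟩

theorem IsRegular.unambiguousConcatLeft (h₁ : L₁.IsRegular) (hR : R.IsRegular) (K : Language α) :
    (unambiguousConcatLeft L₁ K R).IsRegular :=
  ((h₁.setOf_leftQuotient_eq K).inf h₁).inf (h₁.mul (hR.inf isRegular_one.compl)).compl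

theorem IsRegular.unambiguousConcatRight (h₂ : L₂.IsRegular) (hK : K.IsRegular) (R : Language α) :
    (unambiguousConcatRight L₂ K R).IsRegular :=
  ((h₂.setOf_rightQuotient_eq R).inf h₂).inf ((hK.inf isRegular_one.compl).mul h₂).compl

end

end Language

open Language in
theorem unambiguous_concat_eq_finite_union_of_concats_general
    {α : Type} (L1 L2 : Language α)
    (h1 : L1.IsRegular) (h2 : L2.IsRegular) :
    ∃ (n : ℕ) (N M : Fin n → Language α),
      (∀ i, (N i).IsRegular) ∧ (∀ i, (M i).IsRegular) ∧
      (∀ i, N i ≤ L1) ∧ (∀ i, M i ≤ L2) ∧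
      UnambiguousConcat L1 L2 = ⋃ i, (N i * M i : Language α) := by
  have := h1.finite_range_leftQuotient.to_subtype
  have := h2.finite_range_rightQuotient.to_subtype
  obtain ⟨n, ⟨e⟩⟩ :=
    Finite.exists_equiv_fin (Set.range L1.leftQuotient × Set.range L2.rightQuotient)
  have hK : ∀ K ∈ Set.range L1.leftQuotient, K.IsRegular := Set.forall_mem_range.2 h1.leftQuotient
  have hR : ∀ R ∈ Set.range L2.rightQuotient, R.IsRegular := Set.forall_mem_range.2 h2.rightQuotient
  refine ⟨n, fun j ↦ unambiguousConcatLeft L1 (e.symm j).1 (e.symm j).2,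
    fun j ↦ unambiguousConcatRight L2 (e.symm j).1 (e.symm j).2,
    fun j ↦ h1.unambiguousConcatLeft (hR _ (e.symm j).2.2) _,
    fun j ↦ h2.unambiguousConcatRight (hK _ (e.symm j).1.2) _,
    fun _ ↦ unambiguousConcatLeft_le _ _, fun _ ↦ unambiguousConcatRight_le _ _, ?_⟩
  rw [unambiguousConcat_eq_iUnion]
  exact (e.symm.surjective.iUnion_comp fun i ↦
    (unambiguousConcatLeft L1 i.1 i.2 * unambiguousConcatRight L2 i.1 i.2 : Language α)).symm

theorem unambiguous_concat_eq_finite_union_of_concats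
    {α : Type} [Fintype α] (L1 L2 : Language α)
    (h1 : L1.IsRegular) (h2 : L2.IsRegular) :
    ∃ (n : ℕ) (N M : Fin n → Language α),
      (∀ i, (N i).IsRegular) ∧ (∀ i, (M i).IsRegular) ∧
      (∀ i, N i ≤ L1) ∧ (∀ i, M i ≤ L2) ∧
      UnambiguousConcat L1 L2 = ⋃ i, (N i * M i : Language α) :=
  unambiguous_concat_eq_finite_union_of_concats_general L1 L2 h1 h2
end

section
/- Let L1 and L2 be regular languages over a finite alphabet Σ. Then the unambiguous concatenation L1 ⊙ L2 is a regular language. -/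
open Finset

section Aux

attribute [local instance] Classical.propDecidable

variable {α : Type} {σ1 σ2 : Type} [Fintype σ1] [Fintype σ2]

/-- Number of split positions `i ≤ |u|` with `u.take i ∈ L1` and the `M2`-run on
`u.drop i` ending at `s`. -/
noncomputable def splitCnt (L1 : Language α) (M2 : DFA α σ2) (u : List α) (s : σ2) : ℕ :=
  ((Finset.range (u.length + 1)).filter
    (fun i => u.take i ∈ L1 ∧ M2.eval (u.drop i) = s)).card

/-- Product automaton: state of `M1` together with capped counts of split runs in `M2`. -/
noncomputable def prodDFA (M1 : DFA α σ1) (M2 : DFA α σ2) :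
    DFA α (σ1 × (σ2 → Fin 3)) where
  step := fun p a =>
    (M1.step p.1 a,
      fun s => ⟨min ((∑ t : σ2, if M2.step t a = s then (p.2 t).val else 0) +
        (if M1.step p.1 a ∈ M1.accept ∧ M2.start = s then 1 else 0)) 2, by omega⟩)
  start := (M1.start,
      fun s => ⟨min (if M1.start ∈ M1.accept ∧ M2.start = s then 1 else 0) 2, by omega⟩)
  accept := {p | ∑ s : σ2, (if s ∈ M2.accept then (p.2 s).val else 0) = 1}

/-- Saturating sums: capping a capped sum is the same as capping the raw sum. -/
lemma min_sum_min {β : Type*} (S : Finset β) (f : β → ℕ) :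
    ∀ e : ℕ, min ((∑ t ∈ S, min (f t) 2) + e) 2 = min ((∑ t ∈ S, f t) + e) 2 := by
  classical
  induction S using Finset.induction_on with
  | empty => intro e; simp
  | @insert a s h ih =>
    intro e
    rw [Finset.sum_insert h, Finset.sum_insert h]
    have := ih (f a + e)
    omega

lemma sum_min_eq_one_iff {β : Type*} (S : Finset β) (f : β → ℕ) :
    (∑ t ∈ S, min (f t) 2) = 1 ↔ (∑ t ∈ S, f t) = 1 := by
  constructor
  · intro h
    have hle : ∀ t ∈ S, min (f t) 2 ≤ 1 := by
      intro t ht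
      calc min (f t) 2 ≤ ∑ t ∈ S, min (f t) 2 :=
            Finset.single_le_sum (f := fun t => min (f t) 2) (fun t _ => Nat.zero_le _) ht
        _ = 1 := h
    rw [← h]
    exact Finset.sum_congr rfl fun t ht => by have := hle t ht; omega
  · intro h
    have hle : ∀ t ∈ S, f t ≤ 1 := by
      intro t ht
      calc f t ≤ ∑ t ∈ S, f t :=
            Finset.single_le_sum (f := f) (fun t _ => Nat.zero_le _) ht
        _ = 1 := h
    rw [← h]
    exact Finset.sum_congr rfl fun t ht => by have := hle t ht; omega

lemma splitCnt_nil (L1 : Language α) (M2 : DFA α σ2) (s : σ2) :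
    splitCnt L1 M2 [] s = if [] ∈ L1 ∧ M2.start = s then 1 else 0 := by
  unfold splitCnt
  simp only [List.length_nil, Nat.zero_add, Finset.range_one, Finset.filter_singleton,
    List.take_nil, List.drop_nil, DFA.eval_nil]
  split <;> simp_all

lemma splitCnt_append (L1 : Language α) (M2 : DFA α σ2) (u : List α) (a : α) (s : σ2) :
    splitCnt L1 M2 (u ++ [a]) s =
      (∑ t : σ2, if M2.step t a = s then splitCnt L1 M2 u t else 0) +
        (if (u ++ [a]) ∈ L1 ∧ M2.start = s then 1 else 0) := by
  show ((Finset.range ((u ++ [a]).length + 1)).filter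
    (fun i => (u ++ [a]).take i ∈ L1 ∧ M2.eval ((u ++ [a]).drop i) = s)).card = _
  have hlen : (u ++ [a]).length + 1 = (u.length + 1) + 1 := by simp
  rw [hlen, Finset.range_add_one, Finset.filter_insert]
  have hnotmem : u.length + 1 ∉ (Finset.range (u.length + 1)).filter
      (fun i => (u ++ [a]).take i ∈ L1 ∧ M2.eval ((u ++ [a]).drop i) = s) := by
    simp
  -- rewrite the filtered range part
  have hfilter : (Finset.range (u.length + 1)).filter
      (fun i => (u ++ [a]).take i ∈ L1 ∧ M2.eval ((u ++ [a]).drop i) = s) =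
      (Finset.range (u.length + 1)).filter
      (fun i => u.take i ∈ L1 ∧ M2.step (M2.eval (u.drop i)) a = s) := by
    refine Finset.filter_congr fun i hi => ?_
    rw [Finset.mem_range] at hi
    have hi' : i ≤ u.length := by omega
    rw [List.take_append_of_le_length hi', List.drop_append_of_le_length hi',
      DFA.eval_append_singleton]
  have hcard : ((Finset.range (u.length + 1)).filter
      (fun i => u.take i ∈ L1 ∧ M2.step (M2.eval (u.drop i)) a = s)).card =
      ∑ t : σ2, if M2.step t a = s then splitCnt L1 M2 u t else 0 := by
    rw [Finset.card_eq_sum_card_fiberwise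
      (f := fun i => M2.eval (u.drop i)) (t := Finset.univ) (fun x _ => Finset.mem_univ _)]
    refine Finset.sum_congr rfl fun b _ => ?_
    rw [Finset.filter_filter]
    by_cases hb : M2.step b a = s
    · rw [if_pos hb]
      unfold splitCnt
      congr 1
      refine Finset.filter_congr fun i hi => ?_
      constructor
      · rintro ⟨⟨h1, _⟩, h3⟩; exact ⟨h1, h3⟩
      · rintro ⟨h1, h3⟩; exact ⟨⟨h1, by rw [h3]; exact hb⟩, h3⟩
    · rw [if_neg hb]
      rw [Finset.card_eq_zero, Finset.filter_eq_empty_iff]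
      rintro i _ ⟨⟨_, h2⟩, h3⟩
      exact hb (by rw [← h3]; exact h2)
  have hlast : ((u ++ [a]).take (u.length + 1) ∈ L1 ∧
      M2.eval ((u ++ [a]).drop (u.length + 1)) = s) ↔
      ((u ++ [a]) ∈ L1 ∧ M2.start = s) := by
    have h1 : (u ++ [a]).take (u.length + 1) = u ++ [a] := by
      rw [show u.length + 1 = (u ++ [a]).length by simp, List.take_length]
    have h2 : (u ++ [a]).drop (u.length + 1) = [] := by
      rw [show u.length + 1 = (u ++ [a]).length by simp, List.drop_length]
    rw [h1, h2]
    exact Iff.rfl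
  by_cases hP : (u ++ [a]).take (u.length + 1) ∈ L1 ∧
      M2.eval ((u ++ [a]).drop (u.length + 1)) = s
  · rw [if_pos hP, Finset.card_insert_of_notMem hnotmem, hfilter, hcard,
      if_pos (hlast.mp hP)]
  · rw [if_neg hP, hfilter, hcard, if_neg (fun h => hP (hlast.mpr h))]
    omega

lemma prodDFA_invariant (L1 : Language α) (M1 : DFA α σ1) (M2 : DFA α σ2)
    (hM1 : M1.accepts = L1) (u : List α) :
    ((prodDFA M1 M2).eval u).1 = M1.eval u ∧
      ∀ s : σ2, (((prodDFA M1 M2).eval u).2 s).val = min (splitCnt L1 M2 u s) 2 := by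
  induction u using List.reverseRecOn with
  | nil =>
    refine ⟨rfl, fun s => ?_⟩
    rw [splitCnt_nil]
    have : ([] : List α) ∈ L1 ↔ M1.start ∈ M1.accept := by
      rw [← hM1]; exact DFA.mem_accepts _
    simp only [DFA.eval_nil, prodDFA]
    by_cases h : M1.start ∈ M1.accept ∧ M2.start = s <;> simp_all
  | append_singleton u a ih =>
    obtain ⟨ih1, ih2⟩ := ih
    rw [DFA.eval_append_singleton]
    constructor
    · show M1.step ((prodDFA M1 M2).eval u).1 a = M1.eval (u ++ [a])
      rw [ih1, DFA.eval_append_singleton]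
    · intro s
      show min ((∑ t : σ2, if M2.step t a = s then (((prodDFA M1 M2).eval u).2 t).val else 0) +
        (if M1.step ((prodDFA M1 M2).eval u).1 a ∈ M1.accept ∧ M2.start = s then 1 else 0)) 2
        = min (splitCnt L1 M2 (u ++ [a]) s) 2
      have hind : (if M1.step ((prodDFA M1 M2).eval u).1 a ∈ M1.accept ∧ M2.start = s
          then 1 else 0) = (if (u ++ [a]) ∈ L1 ∧ M2.start = s then 1 else 0) := by
        have : (u ++ [a]) ∈ L1 ↔ M1.step ((prodDFA M1 M2).eval u).1 a ∈ M1.accept := by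
          rw [ih1, ← DFA.eval_append_singleton, ← hM1]; exact DFA.mem_accepts _
        by_cases h : (u ++ [a]) ∈ L1 ∧ M2.start = s <;> simp_all
      rw [hind, splitCnt_append]
      have hsum : (∑ t : σ2, if M2.step t a = s then (((prodDFA M1 M2).eval u).2 t).val else 0)
          = ∑ t : σ2, min (if M2.step t a = s then splitCnt L1 M2 u t else 0) 2 := by
        refine Finset.sum_congr rfl fun t _ => ?_
        rw [ih2 t]
        by_cases h : M2.step t a = s <;> simp [h]
      rw [hsum, min_sum_min]

lemma card_splits_eq_sum (L1 L2 : Language α) (M2 : DFA α σ2) (hM2 : M2.accepts = L2)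
    (u : List α) :
    ((Finset.range (u.length + 1)).filter
      (fun i => u.take i ∈ L1 ∧ u.drop i ∈ L2)).card =
      ∑ s : σ2, if s ∈ M2.accept then splitCnt L1 M2 u s else 0 := by
  rw [Finset.card_eq_sum_card_fiberwise
    (f := fun i => M2.eval (u.drop i)) (t := Finset.univ) (fun x _ => Finset.mem_univ _)]
  refine Finset.sum_congr rfl fun b _ => ?_
  rw [Finset.filter_filter]
  have hmem : ∀ w : List α, w ∈ L2 ↔ M2.eval w ∈ M2.accept := by
    intro w; rw [← hM2]; exact DFA.mem_accepts _
  by_cases hb : b ∈ M2.accept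
  · rw [if_pos hb]
    unfold splitCnt
    congr 1
    refine Finset.filter_congr fun i hi => ?_
    constructor
    · rintro ⟨⟨h1, _⟩, h3⟩; exact ⟨h1, h3⟩
    · rintro ⟨h1, h3⟩; exact ⟨⟨h1, (hmem _).mpr (by rw [h3]; exact hb)⟩, h3⟩
  · rw [if_neg hb, Finset.card_eq_zero, Finset.filter_eq_empty_iff]
    rintro i _ ⟨⟨_, h2⟩, h3⟩
    exact hb (by rw [← h3]; exact (hmem _).mp h2)

lemma mem_unambiguousConcat_iff_card (L1 L2 : Language α) (u : List α) :
    u ∈ UnambiguousConcat L1 L2 ↔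
      ((Finset.range (u.length + 1)).filter
        (fun i => u.take i ∈ L1 ∧ u.drop i ∈ L2)).card = 1 := by
  constructor
  · rintro ⟨p, ⟨hp, hp1, hp2⟩, huniq⟩
    rw [Finset.card_eq_one]
    refine ⟨p.1.length, ?_⟩
    have hmemS : p.1.length ∈ (Finset.range (u.length + 1)).filter
        (fun i => u.take i ∈ L1 ∧ u.drop i ∈ L2) := by
      rw [Finset.mem_filter, Finset.mem_range, ← hp]
      refine ⟨by simp only [List.length_append]; omega, ?_, ?_⟩
      · rw [List.take_left]; exact hp1
      · rw [List.drop_left]; exact hp2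
    refine Finset.eq_singleton_iff_unique_mem.mpr ⟨hmemS, fun j hj => ?_⟩
    rw [Finset.mem_filter, Finset.mem_range] at hj
    obtain ⟨hjr, hj1, hj2⟩ := hj
    have := huniq (u.take j, u.drop j) ⟨List.take_append_drop j u, hj1, hj2⟩
    have hfst : u.take j = p.1 := congrArg Prod.fst this
    have hlen : (u.take j).length = j := by
      rw [List.length_take]; omega
    rw [hfst] at hlen
    exact hlen.symm
  · intro h
    rw [Finset.card_eq_one] at h
    obtain ⟨i, hi⟩ := h
    have him : i ∈ (Finset.range (u.length + 1)).filter
        (fun i => u.take i ∈ L1 ∧ u.drop i ∈ L2) := by rw [hi]; exact Finset.mem_singleton_self i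
    rw [Finset.mem_filter, Finset.mem_range] at him
    obtain ⟨hir, hi1, hi2⟩ := him
    refine ⟨(u.take i, u.drop i), ⟨List.take_append_drop i u, hi1, hi2⟩, ?_⟩
    rintro ⟨p1, p2⟩ ⟨hp, hp1, hp2⟩
    have hmemS : p1.length ∈ (Finset.range (u.length + 1)).filter
        (fun i => u.take i ∈ L1 ∧ u.drop i ∈ L2) := by
      rw [Finset.mem_filter, Finset.mem_range, ← hp]
      simp only at hp ⊢
      refine ⟨by simp only [List.length_append]; omega, ?_, ?_⟩
      · rw [List.take_left]; exact hp1
      · rw [List.drop_left]; exact hp2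
    rw [hi, Finset.mem_singleton] at hmemS
    have h1 : p1 = u.take i := by
      rw [← hp, ← hmemS, List.take_left]
    have h2 : p2 = u.drop i := by
      rw [← hp, ← hmemS, List.drop_left]
    simp [h1, h2]

end Aux

theorem unambiguousConcat_isRegular
    {α : Type} [Fintype α] (L1 L2 : Language α)
    (h1 : L1.IsRegular) (h2 : L2.IsRegular) :
    (UnambiguousConcat L1 L2).IsRegular := by
  classical
  obtain ⟨σ1, _, M1, hM1⟩ := h1
  obtain ⟨σ2, _, M2, hM2⟩ := h2
  refine ⟨σ1 × (σ2 → Fin 3), inferInstance, prodDFA M1 M2, ?_⟩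
  ext u
  rw [DFA.mem_accepts]
  have hinv := (prodDFA_invariant L1 M1 M2 hM1 u).2
  have haccept : (prodDFA M1 M2).eval u ∈ (prodDFA M1 M2).accept ↔
      (∑ s : σ2, if s ∈ M2.accept then (((prodDFA M1 M2).eval u).2 s).val else 0) = 1 :=
    Iff.rfl
  rw [haccept]
  have hsum : (∑ s : σ2, if s ∈ M2.accept then (((prodDFA M1 M2).eval u).2 s).val else 0)
      = ∑ s : σ2, min (if s ∈ M2.accept then splitCnt L1 M2 u s else 0) 2 := by
    refine Finset.sum_congr rfl fun s _ => ?_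
    rw [hinv s]
    by_cases h : s ∈ M2.accept <;> simp [h]
  rw [hsum, sum_min_eq_one_iff, ← card_splits_eq_sum L1 L2 M2 hM2 u,
    ← mem_unambiguousConcat_iff_card]
end

section
/- Let L be a regular language over a finite alphabet Σ. Then the language L^# — the set of words u that admit exactly one factorization into a concatenation of factors from L, i.e., there is exactly one list (u_1, …, u_k) of words with every u_i ∈ L and u = u_1 ++ ⋯ ++ u_k — is a regular language. -/
/-!
If `[] ∈ L`, no word factors uniquely, since a factor `[]` can always be appended. Otherwise,
fix a DFA `M` for `L`. A factorization of `u` is the same as a run on `u` of the nondeterministic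
automaton that simulates `M` and may restart it after every accepted factor, ending at a factor
boundary. The number of runs ending in each state, capped at `2`, is updated letter by letter from
its previous value, so it takes finitely many values and determines, for every continuation `y`,
whether `u ++ y` has exactly one factorization; Myhill–Nerode concludes.
-/

/-- `L^#`: the set of words `u` admitting exactly one factorization into a
concatenation of factors from `L`, i.e. there is exactly one list of words,
all belonging to `L`, whose concatenation equals `u`. -/
def UniqueDecompStar {α : Type} (L : Language α) : Language α :=
  {u | ∃! l : List (List α), (∀ v ∈ l, v ∈ L) ∧ l.flatten = u}

namespace Language

variable {α : Type*}

theorem isRegular_of_finite_range_of_append_mem_iff {γ : Type*} {L : Language α}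
    (κ : List α → γ) (hκ : (Set.range κ).Finite)
    (h : ∀ x x', κ x = κ x' → ∀ y, x ++ y ∈ L ↔ x' ++ y ∈ L) : L.IsRegular := by
  refine IsRegular.of_finite_range_leftQuotient <|
    (hκ.image fun c => L.leftQuotient (Function.invFun κ c)).subset ?_
  rintro _ ⟨x, rfl⟩
  exact ⟨κ x, ⟨x, rfl⟩, Set.ext fun y => h _ _ (Function.invFun_eq ⟨x, rfl⟩) y⟩

theorem isRegular_zero : (0 : Language α).IsRegular :=
  isRegular_of_finite_range_of_append_mem_iff (fun _ => ()) (Set.toFinite _)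
    fun _ _ _ _ => Iff.rfl

end Language

namespace Nat

theorem min_add_congr {a a' b b' c : ℕ} (ha : min a c = min a' c) (hb : min b c = min b' c) :
    min (a + b) c = min (a' + b') c := by
  omega

theorem min_mul_congr {a a' c : ℕ} (m : ℕ) (ha : min a c = min a' c) :
    min (a * m) c = min (a' * m) c := by
  rcases lt_or_ge a c with hac | hca
  · obtain rfl : a = a' := by omega
    rfl
  rcases m.eq_zero_or_pos with rfl | hm
  · simp
  have hca' : c ≤ a' := by omega
  rw [min_eq_right (hca.trans (Nat.le_mul_of_pos_right a hm)),
    min_eq_right (hca'.trans (Nat.le_mul_of_pos_right a' hm))]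

theorem min_sum_mul_congr {ι : Type*} (s : Finset ι) {f f' : ι → ℕ} (g : ι → ℕ) {c : ℕ}
    (h : ∀ i, min (f i) c = min (f' i) c) :
    min (∑ i ∈ s, f i * g i) c = min (∑ i ∈ s, f' i * g i) c := by
  induction s using Finset.cons_induction with
  | empty => rfl
  | cons i s hi ih =>
    simp only [Finset.sum_cons]
    exact min_add_congr (min_mul_congr _ (h i)) ih

end Nat

namespace Multiset

variable {β γ : Type*}

theorem count_bind_eq_sum [Fintype β] [DecidableEq β] [DecidableEq γ] (S : Multiset β)
    (g : β → Multiset γ) (c : γ) :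
    (S.bind g).count c = ∑ b, S.count b * (g b).count c := by
  induction S using Multiset.induction_on with
  | empty => simp
  | cons x S ih => simp [count_cons, add_mul, Finset.sum_add_distrib, ih, add_comm]

theorem min_count_bind_congr [Fintype β] [DecidableEq β] [DecidableEq γ] {S S' : Multiset β}
    {n : ℕ} (h : ∀ b, min (S.count b) n = min (S'.count b) n) (g : β → Multiset γ) (c : γ) :
    min ((S.bind g).count c) n = min ((S'.bind g).count c) n := by
  rw [count_bind_eq_sum, count_bind_eq_sum]
  exact Nat.min_sum_mul_congr _ _ h

theorem Nodup.count_map_eq_one_iff [DecidableEq γ] {S : Multiset β} (hS : S.Nodup)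
    (f : β → γ) (c : γ) : (S.map f).count c = 1 ↔ ∃! x, x ∈ S ∧ f x = c := by
  rw [count_map]
  let F : Finset β := ⟨S.filter (c = f ·), hS.filter _⟩
  change F.card = 1 ↔ _
  rw [Finset.card_eq_one_iff_existsUnique]
  exact existsUnique_congr fun x => (mem_filter (s := S)).trans (and_congr_right fun _ => eq_comm)

end Multiset

section RunEnds

variable {α β β' : Type*} (δ : β → α → Multiset β)

/-- `δ b a` lists the successors of `b` on `a` with repetitions, and the multiplicity of `b` in
`runEnds δ S u` is the number of runs on `u` from `S` ending at `b`. -/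
def runEnds (S : Multiset β) (u : List α) : Multiset β :=
  u.foldl (fun S a => S.bind (δ · a)) S

@[simp]
theorem runEnds_nil (S : Multiset β) : runEnds δ S [] = S := rfl

theorem runEnds_append (S : Multiset β) (u v : List α) :
    runEnds δ S (u ++ v) = runEnds δ (runEnds δ S u) v :=
  List.foldl_append

theorem runEnds_append_singleton (S : Multiset β) (u : List α) (a : α) :
    runEnds δ S (u ++ [a]) = (runEnds δ S u).bind (δ · a) :=
  runEnds_append δ S u [a]

theorem runEnds_eq_bind (S : Multiset β) (u : List α) :
    runEnds δ S u = S.bind fun b => runEnds δ {b} u := by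
  induction u generalizing S with
  | nil => exact ((Multiset.bind_singleton S id).trans (Multiset.map_id S)).symm
  | cons a u ih =>
    change runEnds δ (S.bind (δ · a)) u =
      S.bind fun b => runEnds δ (({b} : Multiset β).bind (δ · a)) u
    rw [ih, Multiset.bind_assoc]
    congr 1
    funext b
    rw [Multiset.singleton_bind, ih]

theorem map_runEnds {δ' : β' → α → Multiset β'} (f : β → β')
    (hf : ∀ b a, (δ b a).map f = δ' (f b) a) (S : Multiset β) (u : List α) :
    (runEnds δ S u).map f = runEnds δ' (S.map f) u := by
  induction u generalizing S with
  | nil => rfl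
  | cons a u ih =>
    change (runEnds δ (S.bind (δ · a)) u).map f = runEnds δ' ((S.map f).bind (δ' · a)) u
    rw [ih, Multiset.map_bind, Multiset.bind_map]
    simp only [hf]

theorem nodup_runEnds (hδ : ∀ b a, (δ b a).Nodup)
    (hdisj : ∀ a b b', b ≠ b' → Disjoint (δ b a) (δ b' a)) {S : Multiset β} (hS : S.Nodup)
    (u : List α) : (runEnds δ S u).Nodup := by
  induction u generalizing S with
  | nil => exact hS
  | cons a u ih =>
    refine ih (Multiset.nodup_bind.2 ⟨fun b _ => hδ b a, ?_⟩)
    exact hS.pairwise fun b _ b' _ hbb' => hdisj a b b' hbb'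

/-- The run counts of `x`, capped at `n + 1`, take finitely many values and decide for every `y`
whether `x ++ y` has exactly `n` runs. -/
theorem isRegular_setOf_count_runEnds_eq [Finite β] [DecidableEq β] (S₀ : Multiset β) (b₀ : β)
    (n : ℕ) : Language.IsRegular ({u | (runEnds δ S₀ u).count b₀ = n} : Language α) := by
  have := Fintype.ofFinite β
  refine Language.isRegular_of_finite_range_of_append_mem_iff
    (fun x b => min ((runEnds δ S₀ x).count b) (n + 1)) ?_ fun x x' hxx' y => ?_
  · refine (Set.Finite.pi fun _ => Set.finite_Iic (n + 1)).subset ?_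
    rintro _ ⟨x, rfl⟩ b -
    exact Set.mem_Iic.2 (min_le_right _ _)
  · have := Multiset.min_count_bind_congr (congrFun hxx') (fun b => runEnds δ {b} y) b₀
    change (runEnds δ S₀ (x ++ y)).count b₀ = n ↔ (runEnds δ S₀ (x' ++ y)).count b₀ = n
    rw [runEnds_append, runEnds_append, runEnds_eq_bind _ (runEnds δ S₀ x),
      runEnds_eq_bind _ (runEnds δ S₀ x')]
    omega

end RunEnds

namespace Language

variable {α : Type*} (L : Language α)

open scoped Classical in
/-- A partial factorization `(l, w)` of a word consists of completed factors `l` followed by an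
unfinished factor `w`; reading a letter `a` extends `w`, and additionally closes it if
`w ++ [a] ∈ L`. -/
noncomputable def extendFactorization (x : List (List α) × List α) (a : α) :
    Multiset (List (List α) × List α) :=
  (x.1, x.2 ++ [a]) ::ₘ if x.2 ++ [a] ∈ L then {(x.1 ++ [x.2 ++ [a]], [])} else 0

noncomputable def partialFactorizations (u : List α) : Multiset (List (List α) × List α) :=
  runEnds L.extendFactorization {([], [])} u

variable {L}

theorem mem_extendFactorization {x y : List (List α) × List α} {a : α} :
    y ∈ L.extendFactorization x a ↔
      y = (x.1, x.2 ++ [a]) ∨ x.2 ++ [a] ∈ L ∧ y = (x.1 ++ [x.2 ++ [a]], []) := by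
  unfold extendFactorization
  split_ifs with h <;> simp [h]

theorem nodup_partialFactorizations (u : List α) : (L.partialFactorizations u).Nodup := by
  refine nodup_runEnds _ (fun x a => ?_) (fun a x y hxy => ?_) (Multiset.nodup_singleton _) u
  · unfold extendFactorization
    split_ifs <;> simp
  · refine Multiset.disjoint_left.2 fun {z} hzx hzy => hxy ?_
    rcases mem_extendFactorization.1 hzx with rfl | ⟨-, rfl⟩ <;>
      rcases mem_extendFactorization.1 hzy with h | ⟨-, h⟩ <;>
      simp_all [Prod.ext_iff]

theorem exists_extendFactorization_iff (hL : [] ∉ L) {u : List α} {a : α}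
    {x : List (List α) × List α} :
    (∃ y, ((∀ v ∈ y.1, v ∈ L) ∧ y.1.flatten ++ y.2 = u) ∧ x ∈ L.extendFactorization y a) ↔
      (∀ v ∈ x.1, v ∈ L) ∧ x.1.flatten ++ x.2 = u ++ [a] := by
  constructor
  · rintro ⟨⟨l, w⟩, ⟨hl, rfl⟩, hx⟩
    rcases mem_extendFactorization.1 hx with rfl | ⟨hw, rfl⟩
    · simpa using hl
    · simpa [or_imp, forall_and, hw] using hl
  obtain ⟨l, w⟩ := x
  rintro ⟨hl, hu⟩
  rcases w.eq_nil_or_concat with rfl | ⟨w, b, rfl⟩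
  · rcases l.eq_nil_or_concat with rfl | ⟨l, v, rfl⟩
    · simp at hu
    have hv : v ∈ L := hl v (by simp)
    obtain ⟨v, b, rfl⟩ := (v.eq_nil_or_concat).resolve_left (by rintro rfl; exact hL hv)
    simp only [List.concat_eq_append] at hv hl ⊢
    simp only [List.concat_eq_append, List.flatten_append, List.flatten_singleton,
      List.append_nil, ← List.append_assoc, List.append_singleton_inj] at hu
    obtain ⟨rfl, rfl⟩ := hu
    refine ⟨(l, v), ⟨fun v' hv' => hl v' (by simp [hv']), rfl⟩, ?_⟩
    exact mem_extendFactorization.2 (Or.inr ⟨hv, rfl⟩)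
  · simp only [List.concat_eq_append, ← List.append_assoc, List.append_singleton_inj] at hu ⊢
    obtain ⟨rfl, rfl⟩ := hu
    exact ⟨(l, w), ⟨hl, rfl⟩, mem_extendFactorization.2 (Or.inl rfl)⟩

theorem mem_partialFactorizations (hL : [] ∉ L) {u : List α} {x : List (List α) × List α} :
    x ∈ L.partialFactorizations u ↔ (∀ v ∈ x.1, v ∈ L) ∧ x.1.flatten ++ x.2 = u := by
  induction u using List.reverseRecOn generalizing x with
  | nil =>
    obtain ⟨l, w⟩ := x
    simp only [partialFactorizations, runEnds_nil, Multiset.mem_singleton, Prod.mk.injEq,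
      List.append_eq_nil_iff, List.flatten_eq_nil_iff]
    refine ⟨by rintro ⟨rfl, rfl⟩; simp, fun ⟨hl, hl', hw⟩ => ⟨?_, hw⟩⟩
    exact List.eq_nil_iff_forall_not_mem.2 fun v hv => hL (hl' v hv ▸ hl v hv)
  | append_singleton u a ih =>
    simp only [partialFactorizations, runEnds_append_singleton, Multiset.mem_bind] at ih ⊢
    simp only [ih, exists_extendFactorization_iff hL]

theorem existsUnique_factorization_iff (hL : [] ∉ L) (u : List α) :
    (∃! l : List (List α), (∀ v ∈ l, v ∈ L) ∧ l.flatten = u) ↔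
      ∃! x, x ∈ L.partialFactorizations u ∧ x.2 = [] := by
  simp only [mem_partialFactorizations hL]
  constructor
  · rintro ⟨l, ⟨hl, rfl⟩, huniq⟩
    refine ⟨(l, []), ⟨⟨hl, List.append_nil _⟩, rfl⟩, ?_⟩
    rintro ⟨l', w⟩ ⟨⟨hl', hu⟩, rfl⟩
    rw [huniq l' ⟨hl', by simpa using hu⟩]
  · rintro ⟨⟨l, w⟩, ⟨⟨hl, hu⟩, rfl⟩, huniq⟩
    refine ⟨l, ⟨hl, by simpa using hu⟩, fun l' hl' => ?_⟩
    exact congrArg Prod.fst (huniq (l', []) ⟨⟨hl'.1, by simpa using hl'.2⟩, rfl⟩)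

end Language

namespace DFA

variable {α σ : Type*} (M : DFA α σ)

open scoped Classical in
/-- Runs of `M`, restarted from `M.start` whenever a factor is accepted; the flag `true` marks a
factor boundary. -/
noncomputable def starStep (p : Bool × σ) (a : α) : Multiset (Bool × σ) :=
  (false, M.step p.2 a) ::ₘ if M.step p.2 a ∈ M.accept then {(true, M.start)} else 0

def factorizationState (x : List (List α) × List α) : Bool × σ :=
  (x.2.isEmpty, M.eval x.2)

theorem map_extendFactorization (x : List (List α) × List α) (a : α) :
    (M.accepts.extendFactorization x a).map M.factorizationState =
      M.starStep (M.factorizationState x) a := by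
  have hacc : x.2 ++ [a] ∈ M.accepts ↔ M.step (M.eval x.2) a ∈ M.accept := by
    rw [mem_accepts, eval_append_singleton]
  unfold Language.extendFactorization starStep
  split_ifs <;> simp_all [factorizationState]

end DFA

theorem uniqueDecompStar_eq_zero {α : Type} {L : Language α} (hL : [] ∈ L) :
    UniqueDecompStar L = 0 := by
  refine Set.eq_empty_of_forall_notMem fun u ⟨l, hl, huniq⟩ => ?_
  have := huniq (l ++ [[]]) ⟨by simpa [or_imp, forall_and, hL] using hl.1, by simpa using hl.2⟩
  simpa using congrArg List.length this

theorem uniqueDecompStar_accepts_eq {α : Type} {σ : Type*} [DecidableEq σ] (M : DFA α σ)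
    (hM : [] ∉ M.accepts) :
    UniqueDecompStar M.accepts =
      {u | (runEnds M.starStep {(true, M.start)} u).count (true, M.start) = 1} := by
  ext u
  have hruns : runEnds M.starStep {(true, M.start)} u =
      (M.accepts.partialFactorizations u).map M.factorizationState := by
    rw [Language.partialFactorizations, map_runEnds _ _ M.map_extendFactorization]
    rfl
  change _ ↔ (runEnds M.starStep {(true, M.start)} u).count (true, M.start) = 1
  rw [hruns, (Language.nodup_partialFactorizations u).count_map_eq_one_iff]
  refine (Language.existsUnique_factorization_iff hM u).trans
    (existsUnique_congr fun x => and_congr_right fun _ => ?_)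
  simp only [DFA.factorizationState, Prod.mk.injEq, List.isEmpty_iff]
  exact ⟨fun h => ⟨h, by rw [h, DFA.eval_nil]⟩, And.left⟩

theorem uniqueDecompStar_isRegular_general
    {α : Type} (L : Language α) (h : L.IsRegular) :
    (UniqueDecompStar L).IsRegular := by
  obtain ⟨σ, _, M, rfl⟩ := h
  classical
  by_cases hM : [] ∈ M.accepts
  · rw [uniqueDecompStar_eq_zero hM]
    exact Language.isRegular_zero
  · rw [uniqueDecompStar_accepts_eq M hM]
    exact isRegular_setOf_count_runEnds_eq _ _ _ 1

theorem uniqueDecompStar_isRegular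
    {α : Type} [Fintype α] (L : Language α) (h : L.IsRegular) :
    (UniqueDecompStar L).IsRegular :=
  uniqueDecompStar_isRegular_general L h
end

section
/- Let Q be a finite type, I, F ⊆ Q, and let Δ assign to every pair (p, q) ∈ Q × Q a regular language Δ(p, q) over a finite alphabet Σ. Then the language accepted by the generalised finite automaton (Q, I, F, Δ) — namely, the set of words u such that there exist k ≥ 0, states q_0 ∈ I, q_1, …, q_k with q_k ∈ F, and a factorization u = u_1 ++ ⋯ ++ u_k with u_i ∈ Δ(q_{i−1}, q_i) for all 1 ≤ i ≤ k — is a regular language. -/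
/-- The language accepted by the generalised finite automaton `(Q, I, F, Δ)`:
words `u` that factor as `u = u_1 ++ ⋯ ++ u_k` along a path of states
`q_0 ∈ I, q_1, …, q_k ∈ F` with `u_i ∈ Δ (q_{i-1}) (q_i)`
(for `k = 0`, `u` is empty and the single state lies in `I ∩ F`). -/
def GFALanguage {α Q : Type} (I F : Set Q) (Δ : Q → Q → Language α) :
    Language α :=
  {u | ∃ (k : ℕ) (q : Fin (k + 1) → Q) (us : Fin k → List α),
        q 0 ∈ I ∧ q (Fin.last k) ∈ F ∧
        u = (List.ofFn us).flatten ∧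
        ∀ i : Fin k, us i ∈ Δ (q i.castSucc) (q i.succ)}

/-!
Choose a finite DFA `M p q` for every transition language `Δ p q`. Chaining these DFAs together
with ε-moves (from a state `q` into the start state of every `M q r`, and from an accepting state
of `M p q` back to `q`) gives an ε-NFA with finitely many states accepting the language of the
generalised automaton; the subset construction then turns it into a finite DFA.
-/

namespace GFA

variable {α Q : Type}

inductive acceptsFrom (F : Set Q) (Δ : Q → Q → Language α) : Q → Language α
  | nil {q : Q} : q ∈ F → acceptsFrom F Δ q []
  | cons {p q : Q} {u v : List α} :
      u ∈ Δ p q → v ∈ acceptsFrom F Δ q → acceptsFrom F Δ p (u ++ v)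

variable {I F : Set Q} {Δ : Q → Q → Language α}

theorem flatten_ofFn_mem_acceptsFrom {k : ℕ} {q : Fin (k + 1) → Q} {us : Fin k → List α}
    (hF : q (Fin.last k) ∈ F) (hus : ∀ i, us i ∈ Δ (q i.castSucc) (q i.succ)) :
    (List.ofFn us).flatten ∈ acceptsFrom F Δ (q 0) := by
  induction k with
  | zero => exact .nil hF
  | succ k ih =>
    rw [List.ofFn_succ, List.flatten_cons]
    refine .cons (hus 0) (ih (q := fun i => q i.succ) (us := fun i => us i.succ) ?_ fun i => ?_)
    · simpa only [Fin.succ_last] using hF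
    · simpa only [Fin.succ_castSucc] using hus i.succ

theorem exists_flatten_ofFn_of_mem_acceptsFrom {p : Q} {x : List α}
    (h : x ∈ acceptsFrom F Δ p) :
    ∃ (k : ℕ) (q : Fin (k + 1) → Q) (us : Fin k → List α),
      q 0 = p ∧ q (Fin.last k) ∈ F ∧ x = (List.ofFn us).flatten ∧
      ∀ i, us i ∈ Δ (q i.castSucc) (q i.succ) := by
  induction h with
  | @nil q hq => exact ⟨0, fun _ => q, Fin.elim0, rfl, hq, rfl, fun i => i.elim0⟩
  | @cons p q u v hu _ ih =>
    obtain ⟨k, qs, us, rfl, hF, rfl, hus⟩ := ih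
    refine ⟨k + 1, Fin.cons p qs, Fin.cons u us, rfl, ?_, ?_, Fin.cases ?_ fun i => ?_⟩
    · simpa only [← Fin.succ_last, Fin.cons_succ] using hF
    · simp [List.ofFn_succ]
    · simpa using hu
    · simpa [← Fin.succ_castSucc] using hus i

theorem mem_gfaLanguage_iff {x : List α} :
    x ∈ GFALanguage I F Δ ↔ ∃ p ∈ I, x ∈ acceptsFrom F Δ p := by
  constructor
  · rintro ⟨k, q, us, hI, hF, rfl, hus⟩
    exact ⟨q 0, hI, flatten_ofFn_mem_acceptsFrom hF hus⟩
  · rintro ⟨p, hp, h⟩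
    obtain ⟨k, q, us, rfl, hF, rfl, hus⟩ := exists_flatten_ofFn_of_mem_acceptsFrom h
    exact ⟨k, q, us, hp, hF, rfl, hus⟩

variable {σ : Q → Q → Type*} (I F) (M : ∀ p q, DFA α (σ p q))

/-- `.inl q` is the state `q` of the automaton between two factors; `.inr ⟨p, q, s⟩` is in the
middle of a factor from `Δ p q`, which `M p q` has read up to state `s`. -/
def toεNFA : εNFA α (Q ⊕ (p : Q) × (q : Q) × σ p q) where
  step
    | .inl p, none => Set.range fun q => .inr ⟨p, q, (M p q).start⟩
    | .inl _, some _ => ∅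
    | .inr ⟨p, q, s⟩, none => {t | s ∈ (M p q).accept ∧ t = .inl q}
    | .inr ⟨p, q, s⟩, some a => {.inr ⟨p, q, (M p q).step s a⟩}
  start := .inl '' I
  accept := .inl '' F

def stateLanguage : Q ⊕ (p : Q) × (q : Q) × σ p q → Language α
  | .inl q => acceptsFrom F (fun p q => (M p q).accepts) q
  | .inr ⟨p, q, s⟩ => (M p q).acceptsFrom s * acceptsFrom F (fun p q => (M p q).accepts) q

variable {I F M}

theorem isPath_evalFrom {p q : Q} (s : σ p q) (u : List α) :
    (toεNFA I F M).IsPath (.inr ⟨p, q, s⟩) (.inr ⟨p, q, (M p q).evalFrom s u⟩) (u.map some) := by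
  induction u generalizing s with
  | nil => exact .nil _
  | cons a u ih => exact .cons _ _ _ _ _ rfl (ih _)

theorem exists_isPath_of_mem_acceptsFrom {q : Q} {x : List α}
    (h : x ∈ acceptsFrom F (fun p q => (M p q).accepts) q) :
    ∃ f ∈ F, ∃ x' : List (Option α), x'.reduceOption = x ∧
      (toεNFA I F M).IsPath (.inl q) (.inl f) x' := by
  induction h with
  | @nil q hq => exact ⟨q, hq, [], rfl, .nil _⟩
  | @cons p q u v hu _ ih =>
    obtain ⟨f, hf, x', rfl, hx'⟩ := ih
    refine ⟨f, hf, none :: u.map some ++ none :: x',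
      by simp [List.reduceOption, List.filterMap_map], ?_⟩
    refine .cons _ _ _ _ _ ⟨q, rfl⟩ ((εNFA.isPath_append _).2 ⟨_, isPath_evalFrom _ u, ?_⟩)
    exact .cons _ _ _ _ _ ⟨hu, rfl⟩ hx'

theorem reduceOption_mem_stateLanguage {t t' : Q ⊕ (p : Q) × (q : Q) × σ p q}
    {x' : List (Option α)} (h : (toεNFA I F M).IsPath t t' x')
    (ht' : t' ∈ (toεNFA I F M).accept) :
    x'.reduceOption ∈ stateLanguage F M t := by
  induction h with
  | nil t =>
    obtain ⟨q, hq, rfl⟩ := ht'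
    exact .nil hq
  | cons t s _ a x' hst _ ih =>
    rcases s with p | ⟨p, q, s⟩ <;> rcases a with _ | a
    · obtain ⟨q, rfl⟩ := hst
      obtain ⟨w, hw, v, hv, hx⟩ := ih ht'
      exact hx ▸ .cons hw hv
    · exact hst.elim
    · obtain ⟨hs, rfl⟩ := hst
      exact ⟨[], hs, _, ih ht', rfl⟩
    · obtain rfl : t = .inr ⟨p, q, (M p q).step s a⟩ := hst
      obtain ⟨w, hw, v, hv, hx⟩ := ih ht'
      exact ⟨a :: w, hw, v, hv, by rw [List.reduceOption_cons_of_some, ← hx]; rfl⟩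

theorem toεNFA_accepts :
    (toεNFA I F M).accepts = GFALanguage I F fun p q => (M p q).accepts := by
  ext x
  rw [εNFA.mem_accepts_iff_exists_path, mem_gfaLanguage_iff]
  constructor
  · rintro ⟨_, t', x', ⟨p, hp, rfl⟩, ht', rfl, h⟩
    exact ⟨p, hp, reduceOption_mem_stateLanguage h ht'⟩
  · rintro ⟨p, hp, h⟩
    obtain ⟨f, hf, x', rfl, hx'⟩ := exists_isPath_of_mem_acceptsFrom h
    exact ⟨_, _, x', ⟨p, hp, rfl⟩, ⟨f, hf, rfl⟩, rfl, hx'⟩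

end GFA

theorem εNFA.isRegular_accepts {α σ : Type} [Finite σ] (M : εNFA α σ) : M.accepts.IsRegular :=
  have := Fintype.ofFinite (Set σ)
  ⟨Set σ, inferInstance, M.toNFA.toDFA, by rw [NFA.toDFA_correct, εNFA.toNFA_correct]⟩

theorem gfaLanguage_isRegular_general
    {α Q : Type} [Fintype Q]
    (I F : Set Q) (Δ : Q → Q → Language α)
    (hΔ : ∀ p q, (Δ p q).IsRegular) :
    (GFALanguage I F Δ).IsRegular := by
  choose σ _ M hM using hΔ
  obtain rfl : Δ = fun p q => (M p q).accepts := by funext p q; exact (hM p q).symm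
  rw [← GFA.toεNFA_accepts]
  exact εNFA.isRegular_accepts _

theorem gfaLanguage_isRegular
    {α Q : Type} [Fintype α] [Fintype Q]
    (I F : Set Q) (Δ : Q → Q → Language α)
    (hΔ : ∀ p q, (Δ p q).IsRegular) :
    (GFALanguage I F Δ).IsRegular :=
  gfaLanguage_isRegular_general I F Δ hΔ
end

section
/- If S ⊆ ℤ^n is semilinear, then its Kleene star in the Minkowski-sum monoid on Set(ℤ^n) — namely the set of all finite sums x_1 + ⋯ + x_k with k ≥ 0 and x_1, …, x_k ∈ S (equivalently, the underlying set of the additive submonoid of ℤ^n generated by S) — is semilinear. -/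
open scoped Pointwise

/-- A set `S ⊆ ℤ^n` is linear if it is the translate by some `b` of the
additive submonoid generated by a finite set `P`. -/
def IsLinearSetInt {n : ℕ} (S : Set (Fin n → ℤ)) : Prop :=
  ∃ (b : Fin n → ℤ) (P : Finset (Fin n → ℤ)),
    S = {x | ∃ p ∈ AddSubmonoid.closure (P : Set (Fin n → ℤ)), x = b + p}

/-- A set is semilinear if it is a finite union of linear sets. -/
def IsSemilinearSetInt {n : ℕ} (S : Set (Fin n → ℤ)) : Prop :=
  ∃ (k : ℕ) (T : Fin k → Set (Fin n → ℤ)),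
    (∀ i, IsLinearSetInt (T i)) ∧ S = ⋃ i, T i

/-! A sum of `m + 1` elements of a linear set `b + ⟨P⟩` has the form `b + (m • b + p)` with
`p ∈ ⟨P⟩`, so the submonoid generated by `b + ⟨P⟩` is `{0} ∪ (b + ⟨b, P⟩)`, a semilinear set.
The submonoid generated by a union is the Minkowski sum of the submonoids generated by its
parts, and a Minkowski sum of linear sets is linear; induction on the number of linear pieces
finishes the proof. -/

namespace AddSubmonoid

variable {M : Type*} [AddCommMonoid M]

theorem coe_closure_singleton_add (b : M) (N : AddSubmonoid M) :
    (closure ({b} + (N : Set M)) : Set M) =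
      {0} ∪ ({b} + ((closure {b} ⊔ N : AddSubmonoid M) : Set M)) := by
  simp only [Set.singleton_add]
  apply subset_antisymm
  · intro x hx
    induction hx using closure_induction with
    | mem x hx =>
      obtain ⟨q, hq, rfl⟩ := hx
      exact Or.inr ⟨q, mem_sup_right hq, rfl⟩
    | zero => exact Or.inl rfl
    | add y z _ _ hy hz =>
      rcases hy with rfl | ⟨p, hp, rfl⟩
      · rwa [zero_add]
      rcases hz with rfl | ⟨q, hq, rfl⟩
      · exact Or.inr ⟨p, hp, (add_zero _).symm⟩
      refine Or.inr ⟨b + p + q, ?_, by dsimp only; abel⟩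
      exact add_mem (add_mem (mem_sup_left (subset_closure rfl)) hp) hq
  · rintro x (rfl | ⟨y, hy, rfl⟩)
    · exact zero_mem _
    obtain ⟨_, hm, q, hq, rfl⟩ := mem_sup.1 hy
    obtain ⟨m, rfl⟩ := mem_closure_singleton.1 hm
    have hb : ∀ r ∈ N, b + r ∈ closure ((b + ·) '' (N : Set M)) :=
      fun r hr => subset_closure ⟨r, hr, rfl⟩
    dsimp only
    rw [SetLike.mem_coe, show b + (m • b + q) = m • (b + 0) + (b + q) by rw [add_zero]; abel]
    exact add_mem (nsmul_mem (hb 0 N.zero_mem) m) (hb q hq)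

end AddSubmonoid

section

variable {n : ℕ}

theorem isLinearSetInt_iff {S : Set (Fin n → ℤ)} :
    IsLinearSetInt S ↔ ∃ (b : Fin n → ℤ) (P : Finset (Fin n → ℤ)),
      S = {b} + (AddSubmonoid.closure (P : Set (Fin n → ℤ)) : Set (Fin n → ℤ)) := by
  refine exists₂_congr fun b P => ?_
  rw [Set.singleton_add]
  simp only [Set.image, SetLike.mem_coe, eq_comm]

theorem isLinearSetInt_zero : IsLinearSetInt ({0} : Set (Fin n → ℤ)) :=
  isLinearSetInt_iff.2 ⟨0, ∅, by simp⟩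

theorem IsLinearSetInt.add {A B : Set (Fin n → ℤ)} (hA : IsLinearSetInt A)
    (hB : IsLinearSetInt B) : IsLinearSetInt (A + B) := by
  obtain ⟨b₁, P₁, rfl⟩ := isLinearSetInt_iff.1 hA
  obtain ⟨b₂, P₂, rfl⟩ := isLinearSetInt_iff.1 hB
  refine isLinearSetInt_iff.2 ⟨b₁ + b₂, P₁ ∪ P₂, ?_⟩
  rw [add_add_add_comm, Set.singleton_add_singleton, ← AddSubmonoid.coe_sup, Finset.coe_union,
    AddSubmonoid.closure_union]

theorem isSemilinearSetInt_iUnion {ι : Type*} [Finite ι] {T : ι → Set (Fin n → ℤ)}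
    (hT : ∀ i, IsLinearSetInt (T i)) : IsSemilinearSetInt (⋃ i, T i) := by
  obtain ⟨k, ⟨e⟩⟩ := Finite.exists_equiv_fin ι
  exact ⟨k, T ∘ e.symm, fun i => hT _, (e.symm.surjective.iUnion_comp T).symm⟩

theorem IsLinearSetInt.isSemilinearSetInt {S : Set (Fin n → ℤ)} (hS : IsLinearSetInt S) :
    IsSemilinearSetInt S :=
  ⟨1, fun _ => S, fun _ => hS, (Set.iUnion_const S).symm⟩

theorem IsSemilinearSetInt.union {A B : Set (Fin n → ℤ)} (hA : IsSemilinearSetInt A)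
    (hB : IsSemilinearSetInt B) : IsSemilinearSetInt (A ∪ B) := by
  obtain ⟨k, T, hT, rfl⟩ := hA
  obtain ⟨m, U, hU, rfl⟩ := hB
  convert isSemilinearSetInt_iUnion (T := Sum.elim T U) (by rintro (i | j) <;> simp [hT, hU])
  simp only [Set.iUnion_sum, Sum.elim_inl, Sum.elim_inr]

theorem IsSemilinearSetInt.add {A B : Set (Fin n → ℤ)} (hA : IsSemilinearSetInt A)
    (hB : IsSemilinearSetInt B) : IsSemilinearSetInt (A + B) := by
  obtain ⟨k, T, hT, rfl⟩ := hA
  obtain ⟨m, U, hU, rfl⟩ := hB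
  convert isSemilinearSetInt_iUnion fun p : Fin k × Fin m => (hT p.1).add (hU p.2)
  rw [Set.iUnion_prod', Set.iUnion_add]
  simp only [Set.add_iUnion]

theorem IsSemilinearSetInt.induction_on {motive : Set (Fin n → ℤ) → Prop}
    {S : Set (Fin n → ℤ)} (hS : IsSemilinearSetInt S) (empty : motive ∅)
    (linear : ∀ T, IsLinearSetInt T → motive T)
    (union : ∀ A B, motive A → motive B → motive (A ∪ B)) : motive S := by
  obtain ⟨k, T, hT, rfl⟩ := hS
  induction k with
  | zero => rwa [Set.iUnion_of_empty]
  | succ k ih =>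
    have : (⋃ i, T i) = T 0 ∪ ⋃ i : Fin k, T i.succ := by
      ext x
      simp only [Set.mem_iUnion, Set.mem_union, Fin.exists_fin_succ]
    rw [this]
    exact union _ _ (linear _ (hT 0)) (ih _ fun i => hT i.succ)

theorem IsLinearSetInt.isSemilinearSetInt_closure {S : Set (Fin n → ℤ)} (hS : IsLinearSetInt S) :
    IsSemilinearSetInt (AddSubmonoid.closure S : Set (Fin n → ℤ)) := by
  obtain ⟨b, P, rfl⟩ := isLinearSetInt_iff.1 hS
  rw [AddSubmonoid.coe_closure_singleton_add, ← AddSubmonoid.closure_union]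
  refine isLinearSetInt_zero.isSemilinearSetInt.union (IsLinearSetInt.isSemilinearSetInt ?_)
  exact isLinearSetInt_iff.2 ⟨b, insert b P, by rw [Finset.coe_insert, Set.insert_eq]⟩

end

/-- Semilinear sets are closed under Kleene star in the Minkowski-sum monoid:
the set of all finite sums of elements of `S`, i.e. the underlying set of the
additive submonoid generated by `S`, is semilinear. -/
theorem isSemilinearSet_closure {n : ℕ} (S : Set (Fin n → ℤ))
    (hS : IsSemilinearSetInt S) :
    IsSemilinearSetInt ((AddSubmonoid.closure S : AddSubmonoid (Fin n → ℤ)) :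
      Set (Fin n → ℤ)) := by
  refine hS.induction_on ?_ (fun T hT => hT.isSemilinearSetInt_closure) fun A B hA hB => ?_
  · simpa using isLinearSetInt_zero.isSemilinearSetInt
  · rw [AddSubmonoid.closure_union, AddSubmonoid.coe_sup]
    exact hA.add hB
end

section
/- Let Σ be a finite type, n ∈ ℕ, and f : Σ → Set(ℤ^n) a function such that f(a) is semilinear for every a ∈ Σ. Extend f to a monoid morphism μ from words over Σ (under concatenation) to subsets of ℤ^n (under Minkowski sum), i.e., μ(a_1 a_2 ⋯ a_k) = f(a_1) + f(a_2) + ⋯ + f(a_k) and μ(ε) = {0}. Then for every regular language N over Σ, the set μ(N) = ⋃_{w ∈ N} μ(w) is semilinear. -/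
/-!
Kleene's theorem, via the McNaughton–Yamada recursion: if `L_X(p, q)` is the set of words leading
a DFA from `p` to `q` through intermediate states in `X`, then
`L_{X ∪ {r}}(p, q) = L_X(p, q) + L_X(p, r) L_X(r, r)∗ L_X(r, q)` (cut a run at its first visit
to `r`), so every regular language is denoted by a regular expression. The map
`L ↦ ⋃_{w ∈ L} μ(w)` turns union, concatenation and Kleene star into union, Minkowski sum and
generated submonoid, under all of which semilinear sets are closed; induction on the regular
expression concludes.
-/

open scoped Pointwise

/-- A set `S ⊆ ℤ^n` is linear if it is the translate by some `b` of the
additive submonoid generated by a finite set `P`. -/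
def IsLinearSet' {n : ℕ} (S : Set (Fin n → ℤ)) : Prop :=
  ∃ (b : Fin n → ℤ) (P : Finset (Fin n → ℤ)),
    S = {x | ∃ p ∈ AddSubmonoid.closure (P : Set (Fin n → ℤ)), x = b + p}

/-- A set is semilinear if it is a finite union of linear sets. -/
def IsSemilinearSet' {n : ℕ} (S : Set (Fin n → ℤ)) : Prop :=
  ∃ (k : ℕ) (T : Fin k → Set (Fin n → ℤ)),
    (∀ i, IsLinearSet' (T i)) ∧ S = ⋃ i, T i

theorem isLinearSet'_iff {n : ℕ} {S : Set (Fin n → ℤ)} : IsLinearSet' S ↔ IsLinearSet S := by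
  rw [IsLinearSet', isLinearSet_iff]
  refine exists₂_congr fun b P => ?_
  have hcoset : {x | ∃ p ∈ AddSubmonoid.closure (P : Set (Fin n → ℤ)), x = b + p} =
      b +ᵥ (AddSubmonoid.closure (P : Set (Fin n → ℤ)) : Set (Fin n → ℤ)) := by
    ext x
    simp [Set.mem_vadd_set, eq_comm]
  rw [hcoset]

theorem isSemilinearSet'_iff {n : ℕ} {S : Set (Fin n → ℤ)} :
    IsSemilinearSet' S ↔ IsSemilinearSet S := by
  constructor
  · rintro ⟨k, T, hT, rfl⟩
    exact .iUnion fun i => (isLinearSet'_iff.1 (hT i)).isSemilinearSet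
  · rw [isSemilinearSet_iff]
    rintro ⟨F, hF, rfl⟩
    refine ⟨F.card, fun i => F.equivFin.symm i,
      fun i => isLinearSet'_iff.2 (hF _ (F.equivFin.symm i).2), ?_⟩
    rw [Set.sUnion_eq_iUnion]
    exact (F.equivFin.symm.surjective.iUnion_comp _).symm

open scoped Computability

namespace Language

variable {α M : Type*} [AddMonoid M] (f : α → Set M)

def sumImage (L : Language α) : Set M :=
  ⋃ w ∈ L, (w.map f).sum

theorem sumImage_mono {L L' : Language α} (h : L ≤ L') : L.sumImage f ⊆ L'.sumImage f :=
  Set.biUnion_subset_biUnion_left h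

theorem sum_subset_sumImage {L : Language α} {w : List α} (hw : w ∈ L) :
    ((w.map f).sum : Set M) ⊆ L.sumImage f :=
  Set.subset_biUnion_of_mem (u := fun w => ((w.map f).sum : Set M)) hw

@[simp]
theorem sumImage_zero : (0 : Language α).sumImage f = ∅ := by
  simp [sumImage, notMem_zero]

@[simp]
theorem sumImage_singleton (w : List α) : ({w} : Language α).sumImage f = (w.map f).sum := by
  ext x
  simp only [sumImage, Set.mem_iUnion]
  exact ⟨fun ⟨_, hw, hx⟩ => hw ▸ hx, fun hx => ⟨w, rfl, hx⟩⟩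

@[simp]
theorem sumImage_one : (1 : Language α).sumImage f = {0} := by
  simp [sumImage, mem_one, Set.singleton_zero]

@[simp]
theorem sumImage_add (L L' : Language α) :
    (L + L').sumImage f = L.sumImage f ∪ L'.sumImage f := by
  ext x
  simp only [sumImage, Set.mem_iUnion, mem_add, Set.mem_union, exists_prop, or_and_right,
    exists_or]

@[simp]
theorem sumImage_mul (L L' : Language α) :
    (L * L').sumImage f = L.sumImage f + L'.sumImage f := by
  ext x
  simp only [sumImage, Set.mem_iUnion, mem_mul, Set.mem_add, exists_prop]
  constructor
  · rintro ⟨_, ⟨u, hu, v, hv, rfl⟩, hx⟩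
    rw [List.map_append, List.sum_append] at hx
    obtain ⟨y, hy, z, hz, rfl⟩ := hx
    exact ⟨y, ⟨u, hu, hy⟩, z, ⟨v, hv, hz⟩, rfl⟩
  · rintro ⟨y, ⟨u, hu, hy⟩, z, ⟨v, hv, hz⟩, rfl⟩
    refine ⟨u ++ v, ⟨u, hu, v, hv, rfl⟩, ?_⟩
    rw [List.map_append, List.sum_append]
    exact Set.add_mem_add hy hz

theorem sumImage_kstar_subset (L : Language α) :
    L∗.sumImage f ⊆ AddSubmonoid.closure (L.sumImage f) := by
  let words : Language α := {w | ((w.map f).sum : Set M) ⊆ AddSubmonoid.closure (L.sumImage f)}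
  suffices L∗ ≤ words from Set.iUnion₂_subset this
  refine kstar_le_of_mul_le_right ?_ ?_
  · intro w hw
    change ((w.map f).sum : Set M) ⊆ _
    rw [(mem_one w).1 hw, List.map_nil, List.sum_nil, Set.zero_subset]
    exact zero_mem _
  · intro w hw
    obtain ⟨u, hu, v, hv, rfl⟩ := mem_mul.1 hw
    change ((u ++ v).map f).sum ⊆ _
    rw [List.map_append, List.sum_append, ← AddSubmonoid.coe_add_self_eq]
    exact Set.add_subset_add ((sum_subset_sumImage f hu).trans AddSubmonoid.subset_closure) hv

theorem closure_subset_sumImage_kstar (L : Language α) :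
    (AddSubmonoid.closure (L.sumImage f) : Set M) ⊆ L∗.sumImage f := by
  intro x hx
  induction hx using AddSubmonoid.closure_induction with
  | mem x hx => exact sumImage_mono f le_kstar hx
  | zero => exact sumImage_mono f one_le_kstar (by simp)
  | add x y _ _ hx hy =>
    rw [← kstar_mul_kstar L, sumImage_mul]
    exact Set.add_mem_add hx hy

@[simp]
theorem sumImage_kstar (L : Language α) :
    L∗.sumImage f = AddSubmonoid.closure (L.sumImage f) :=
  (sumImage_kstar_subset f L).antisymm (closure_subset_sumImage_kstar f L)

end Language

namespace RegularExpression

variable {α : Type*}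

theorem isSemilinearSet_sumImage_matches' {M : Type*} [AddCommMonoid M]
    {f : α → Set M} (hf : ∀ a, IsSemilinearSet (f a)) (P : RegularExpression α) :
    IsSemilinearSet (P.matches'.sumImage f) := by
  induction P with
  | zero | epsilon => simp
  | char a => simpa using hf a
  | plus P Q hP hQ => simpa only [matches', Language.sumImage_add] using hP.union hQ
  | comp P Q hP hQ => simpa only [matches', Language.sumImage_mul] using hP.add hQ
  | star P hP => simpa only [matches', Language.sumImage_kstar] using hP.closure

theorem exists_matches'_eq_singleton (w : List α) :
    ∃ P : RegularExpression α, P.matches' = {w} := by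
  induction w with
  | nil => exact ⟨1, rfl⟩
  | cons a w ih =>
    obtain ⟨P, hP⟩ := ih
    refine ⟨char a * P, ?_⟩
    ext v
    rw [matches'_mul, matches'_char, hP, Language.mem_mul]
    constructor
    · rintro ⟨_, rfl, _, rfl, rfl⟩
      rfl
    · rintro rfl
      exact ⟨[a], rfl, w, rfl, rfl⟩

theorem exists_matches'_eq_biSup {ι : Type*} {s : Set ι} (hs : s.Finite) {L : ι → Language α}
    (hL : ∀ i ∈ s, ∃ P : RegularExpression α, P.matches' = L i) :
    ∃ P : RegularExpression α, P.matches' = ⨆ i ∈ s, L i := by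
  induction s, hs using Set.Finite.induction_on with
  | empty => exact ⟨0, by simpa using bot_eq_zero.symm⟩
  | insert _ _ ih =>
    obtain ⟨P, hP⟩ := hL _ (Set.mem_insert _ _)
    obtain ⟨Q, hQ⟩ := ih fun i hi => hL i (Set.mem_insert_of_mem _ hi)
    exact ⟨P + Q, by rw [matches'_add, hP, hQ, iSup_insert, add_eq_sup]⟩

theorem exists_matches'_eq_of_finite {L : Language α} (hL : Set.Finite L) :
    ∃ P : RegularExpression α, P.matches' = L := by
  obtain ⟨P, hP⟩ := exists_matches'_eq_biSup hL fun w _ => exists_matches'_eq_singleton w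
  exact ⟨P, hP.trans (Set.biUnion_of_singleton (L : Set (List α)))⟩

end RegularExpression

namespace DFA

variable {α σ : Type*} (M : DFA α σ)

def pathsThrough (X : Set σ) (p q : σ) : Language α :=
  {w | M.evalFrom p w = q ∧ ∀ k, 0 < k → k < w.length → M.evalFrom p (w.take k) ∈ X}

variable {M}

theorem pathsThrough_mono {X Y : Set σ} (h : X ⊆ Y) (p q : σ) :
    M.pathsThrough X p q ≤ M.pathsThrough Y p q :=
  fun _ ⟨hw, hX⟩ => ⟨hw, fun k hk₀ hk => h (hX k hk₀ hk)⟩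

theorem length_le_one_of_mem_pathsThrough_empty {p q : σ} {w : List α}
    (hw : w ∈ M.pathsThrough ∅ p q) : w.length ≤ 1 := by
  by_contra! h
  exact hw.2 1 one_pos h

theorem one_le_pathsThrough (X : Set σ) (p : σ) : 1 ≤ M.pathsThrough X p p := by
  intro w hw
  rw [(Language.mem_one w).1 hw]
  exact ⟨rfl, fun k _ hk => absurd hk (Nat.not_lt_zero k)⟩

theorem pathsThrough_mul_le {X : Set σ} {p r q : σ} (hr : r ∈ X) :
    M.pathsThrough X p r * M.pathsThrough X r q ≤ M.pathsThrough X p q := by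
  intro w hw
  obtain ⟨u, ⟨hu, huX⟩, v, ⟨hv, hvX⟩, rfl⟩ := Language.mem_mul.1 hw
  refine ⟨by rw [evalFrom_of_append, hu, hv], fun k hk₀ hk => ?_⟩
  rw [List.take_append, evalFrom_of_append]
  rcases lt_trichotomy k u.length with hku | rfl | hku
  · rw [Nat.sub_eq_zero_of_le hku.le, List.take_zero, evalFrom_nil]
    exact huX k hk₀ hku
  · rw [List.take_length, hu, Nat.sub_self, List.take_zero, evalFrom_nil]
    exact hr
  · rw [List.take_of_length_le hku.le, hu]
    exact hvX _ (by omega) (by simp at hk; omega)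

theorem kstar_pathsThrough_le {X : Set σ} {r : σ} (hr : r ∈ X) :
    (M.pathsThrough X r r)∗ ≤ M.pathsThrough X r r :=
  kstar_le_of_mul_le_right (one_le_pathsThrough X r) (pathsThrough_mul_le hr)

theorem exists_split_of_mem_pathsThrough_insert {X : Set σ} {r p q : σ} {w : List α}
    (hw : w ∈ M.pathsThrough (insert r X) p q) :
    w ∈ M.pathsThrough X p q ∨ ∃ u ∈ M.pathsThrough X p r, u ≠ [] ∧
      ∃ v ∈ M.pathsThrough (insert r X) r q, u ++ v = w := by
  classical
  obtain ⟨hwq, hwX⟩ := hw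
  by_cases hvisit : ∃ k, 0 < k ∧ k < w.length ∧ M.evalFrom p (w.take k) = r
  · obtain ⟨k, ⟨hk₀, hkw, hkr⟩, hmin⟩ : ∃ k, (0 < k ∧ k < w.length ∧
        M.evalFrom p (w.take k) = r) ∧ ∀ j < k, 0 < j → M.evalFrom p (w.take j) ≠ r :=
      ⟨Nat.find hvisit, Nat.find_spec hvisit,
        fun j hjk hj₀ hjr => Nat.find_min hvisit hjk
          ⟨hj₀, hjk.trans (Nat.find_spec hvisit).2.1, hjr⟩⟩
    have hdrop (v : List α) : M.evalFrom r v = M.evalFrom p (w.take k ++ v) := by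
      rw [evalFrom_of_append, hkr]
    refine Or.inr ⟨w.take k, ⟨hkr, fun j hj₀ hjk => ?_⟩, ?_, w.drop k, ⟨?_, fun j hj₀ hjk => ?_⟩,
      w.take_append_drop k⟩
    · have hj : j < k := hjk.trans_le (List.length_take_le _ _)
      rw [List.take_take, min_eq_left hj.le]
      exact (hwX j hj₀ (hj.trans hkw)).resolve_left (hmin j hj hj₀)
    · exact List.length_pos_iff.1 (by simp; omega)
    · rw [hdrop, List.take_append_drop, hwq]
    · rw [hdrop, ← List.take_add]
      exact hwX _ (by omega) (by simp at hjk; omega)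
  · simp only [not_exists, not_and] at hvisit
    exact Or.inl ⟨hwq, fun k hk₀ hkw => (hwX k hk₀ hkw).resolve_left (hvisit k hk₀ hkw)⟩

theorem mem_kstar_mul_of_mem_pathsThrough_insert {X : Set σ} {r q : σ} {w : List α}
    (hw : w ∈ M.pathsThrough (insert r X) r q) :
    w ∈ (M.pathsThrough X r r)∗ * M.pathsThrough X r q := by
  rcases exists_split_of_mem_pathsThrough_insert hw with hw | ⟨u, hu, hu₀, v, hv, huv⟩
  · have hle : 1 * M.pathsThrough X r q ≤ (M.pathsThrough X r r)∗ * M.pathsThrough X r q :=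
      mul_le_mul_left one_le_kstar _
    exact hle (by rwa [one_mul])
  · have hv' := mem_kstar_mul_of_mem_pathsThrough_insert hv
    have hw' := Language.append_mem_mul hu hv'
    rw [← mul_assoc, huv] at hw'
    have hle : M.pathsThrough X r r * (M.pathsThrough X r r)∗ * M.pathsThrough X r q ≤
        (M.pathsThrough X r r)∗ * M.pathsThrough X r q :=
      mul_le_mul_left mul_kstar_le_kstar _
    exact hle hw'
termination_by w.length
decreasing_by
  rw [← huv, List.length_append]
  have := List.length_pos_iff.2 hu₀
  omega

theorem pathsThrough_insert (X : Set σ) (r p q : σ) :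
    M.pathsThrough (insert r X) p q =
      M.pathsThrough X p q + M.pathsThrough X p r * (M.pathsThrough X r r)∗ *
        M.pathsThrough X r q := by
  refine le_antisymm (fun w hw => ?_) (add_le ?_ ?_)
  · rcases exists_split_of_mem_pathsThrough_insert hw with hw | ⟨u, hu, -, v, hv, rfl⟩
    · exact Or.inl hw
    · rw [mul_assoc]
      exact Or.inr (Language.append_mem_mul hu (mem_kstar_mul_of_mem_pathsThrough_insert hv))
  · exact pathsThrough_mono (Set.subset_insert r X) p q
  · have hr : r ∈ insert r X := Set.mem_insert r X
    calc M.pathsThrough X p r * (M.pathsThrough X r r)∗ * M.pathsThrough X r q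
        ≤ M.pathsThrough (insert r X) p r * (M.pathsThrough (insert r X) r r)∗ *
            M.pathsThrough (insert r X) r q := by
          gcongr <;> exact pathsThrough_mono (Set.subset_insert r X) _ _
      _ ≤ M.pathsThrough (insert r X) p r * M.pathsThrough (insert r X) r r *
            M.pathsThrough (insert r X) r q := by
          gcongr
          exact kstar_pathsThrough_le hr
      _ ≤ M.pathsThrough (insert r X) p q :=
          (mul_le_mul_left (pathsThrough_mul_le hr) _).trans (pathsThrough_mul_le hr)

theorem exists_matches'_eq_pathsThrough [Finite α] {X : Set σ} (hX : X.Finite) (p q : σ) :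
    ∃ P : RegularExpression α, P.matches' = M.pathsThrough X p q := by
  induction X, hX using Set.Finite.induction_on generalizing p q with
  | empty =>
    exact RegularExpression.exists_matches'_eq_of_finite <| (List.finite_length_le α 1).subset
      fun _ => length_le_one_of_mem_pathsThrough_empty
  | @insert r X _ _ ih =>
    obtain ⟨P₁, h₁⟩ := ih p q
    obtain ⟨P₂, h₂⟩ := ih p r
    obtain ⟨P₃, h₃⟩ := ih r r
    obtain ⟨P₄, h₄⟩ := ih r q
    refine ⟨P₁ + P₂ * P₃.star * P₄, ?_⟩
    simp only [RegularExpression.matches'_add, RegularExpression.matches'_mul,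
      RegularExpression.matches'_star, h₁, h₂, h₃, h₄, pathsThrough_insert]

theorem accepts_eq_biSup_pathsThrough_univ :
    M.accepts = ⨆ q ∈ M.accept, M.pathsThrough Set.univ M.start q := by
  ext w
  simp only [Language.mem_iSup]
  exact ⟨fun hw => ⟨M.eval w, hw, rfl, fun _ _ _ => trivial⟩,
    fun ⟨_, hq, hw, _⟩ => by rwa [mem_accepts, eval, hw]⟩

end DFA

theorem Language.IsRegular.exists_matches'_eq {α : Type*} [Finite α] {L : Language α}
    (hL : L.IsRegular) : ∃ P : RegularExpression α, P.matches' = L := by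
  obtain ⟨σ, _, M, rfl⟩ := hL
  rw [M.accepts_eq_biSup_pathsThrough_univ]
  exact RegularExpression.exists_matches'_eq_biSup (Set.toFinite _)
    fun q _ => M.exists_matches'_eq_pathsThrough Set.finite_univ _ _

/-- The extension of a letter-to-semilinear-set assignment `f` to a monoid
morphism `μ` from words (under concatenation) to subsets of `ℤ^n` (under
Minkowski sum, with identity `{0}`): `μ w = f a_1 + ⋯ + f a_k`.
The image `μ(N) = ⋃_{w ∈ N} μ(w)` of any regular language `N` is
semilinear. -/
theorem isSemilinearSet_image_of_regular
    {α : Type} [Fintype α] {n : ℕ}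
    (f : α → Set (Fin n → ℤ)) (hf : ∀ a, IsSemilinearSet' (f a))
    (N : Language α) (hN : N.IsRegular) :
    IsSemilinearSet' (⋃ w ∈ N, ((w.map f).sum : Set (Fin n → ℤ))) := by
  obtain ⟨P, rfl⟩ := hN.exists_matches'_eq
  exact isSemilinearSet'_iff.2 <|
    P.isSemilinearSet_sumImage_matches' fun a => isSemilinearSet'_iff.1 (hf a)
end

section
/- Let Q be a finite type, I, F ⊆ Q, and S : Q × Q → Set(ℤ^n) a function assigning to each pair of states a semilinear subset of ℤ^n. Then the set of all values x ∈ ℤ^n such that there exist k ≥ 0, a sequence of states q_0, q_1, …, q_k with q_0 ∈ I and q_k ∈ F, and elements x_i ∈ S(q_{i−1}, q_i) for 1 ≤ i ≤ k with x = x_1 + ⋯ + x_k (the empty sum 0 being allowed when I ∩ F is nonempty), is a semilinear subset of ℤ^n. -/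
/-- A set `S ⊆ ℤ^n` is linear if it is the translate by some `b` of the
additive submonoid generated by a finite set `P`. -/
def IsLinearSetZ {n : ℕ} (S : Set (Fin n → ℤ)) : Prop :=
  ∃ (b : Fin n → ℤ) (P : Finset (Fin n → ℤ)),
    S = {x | ∃ p ∈ AddSubmonoid.closure (P : Set (Fin n → ℤ)), x = b + p}

/-- A set is semilinear if it is a finite union of linear sets. -/
def IsSemilinearSetZ {n : ℕ} (S : Set (Fin n → ℤ)) : Prop :=
  ∃ (k : ℕ) (T : Fin k → Set (Fin n → ℤ)),
    (∀ i, IsLinearSetZ (T i)) ∧ S = ⋃ i, T i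

/-!
Kleene's argument for finite automata, with semilinear sets in place of regular languages.
Semilinear sets are closed under union, pointwise sum and additive closure. Writing `R_T(p, q)`
for the sums along nonempty paths from `p` to `q` with all intermediate states in `T`, splitting
a path at its visits to a new state `r` gives
`R_{T ∪ {r}}(p, q) = R_T(p, q) ∪ (R_T(p, r) + closure R_T(r, r) + R_T(r, q))`,
so by induction on `T` every `R_Q(p, q)` is semilinear. The empty path only adds `0`.
-/

open Set Pointwise

theorem isLinearSetZ_iff {n : ℕ} {S : Set (Fin n → ℤ)} :
    IsLinearSetZ S ↔ IsLinearSet S := by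
  have (b : Fin n → ℤ) (P : Finset (Fin n → ℤ)) :
      {x | ∃ p ∈ AddSubmonoid.closure (P : Set (Fin n → ℤ)), x = b + p} =
        b +ᵥ (AddSubmonoid.closure (P : Set (Fin n → ℤ)) : Set (Fin n → ℤ)) := by
    ext x
    simp [mem_vadd_set, eq_comm]
  simp only [IsLinearSetZ, isLinearSet_iff, this]

theorem isSemilinearSetZ_iff {n : ℕ} {S : Set (Fin n → ℤ)} :
    IsSemilinearSetZ S ↔ IsSemilinearSet S := by
  constructor
  · rintro ⟨k, T, hT, rfl⟩
    exact .iUnion fun i => (isLinearSetZ_iff.1 (hT i)).isSemilinearSet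
  · intro h
    obtain ⟨L, hL, rfl⟩ := isSemilinearSet_iff.1 h
    refine ⟨L.card, fun i => L.equivFin.symm i,
      fun i => isLinearSetZ_iff.2 (hL _ (L.equivFin.symm i).2), ?_⟩
    rw [Set.sUnion_eq_iUnion]
    exact (L.equivFin.symm.iSup_comp (g := fun t : L => (t : Set (Fin n → ℤ)))).symm

section PathSums

variable {M Q : Type*} [AddCommMonoid M]

/-- `PathSum S T p q x`: some nonempty path from `p` to `q` whose intermediate states all lie
in `T` has edge labels, taken from `S`, summing to `x`. -/
inductive PathSum (S : Q → Q → Set M) (T : Set Q) : Q → Q → M → Prop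
  | single {p q : Q} {x : M} : x ∈ S p q → PathSum S T p q x
  | cons {p r q : Q} {x y : M} :
      x ∈ S p r → r ∈ T → PathSum S T r q y → PathSum S T p q (x + y)

variable {S : Q → Q → Set M} {T T' : Set Q} {p q r : Q} {x y : M}

namespace PathSum

theorem mono (h : PathSum S T p q x) (hT : T ⊆ T') : PathSum S T' p q x := by
  induction h with
  | single h => exact single h
  | cons h hr _ ih => exact cons h (hT hr) ih

theorem trans (hr : r ∈ T) (h₁ : PathSum S T p r x) (h₂ : PathSum S T r q y) :
    PathSum S T p q (x + y) := by
  induction h₁ with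
  | single h => exact cons h hr h₂
  | cons h hr' _ ih => rw [add_assoc]; exact cons h hr' (ih hr h₂)

theorem closure_loops_add (hr : r ∈ T) {c : M}
    (hc : c ∈ AddSubmonoid.closure {y | PathSum S T r r y}) (h : PathSum S T r q x) :
    PathSum S T r q (c + x) := by
  induction hc using AddSubmonoid.closure_induction generalizing x with
  | mem y hy => exact trans hr hy h
  | zero => rwa [zero_add]
  | add u v _ _ ihu ihv => rw [add_assoc]; exact ihu (ihv h)

theorem of_insert (h : PathSum S (insert r T) p q x) :
    PathSum S T p q x ∨ x ∈ {a | PathSum S T p r a} +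
      (AddSubmonoid.closure {y | PathSum S T r r y} : Set M) + {d | PathSum S T r q d} := by
  induction h with
  | single h => exact Or.inl (single h)
  | @cons p s q x y h hs _ ih =>
    rcases hs with rfl | hs
    · refine Or.inr ?_
      rcases ih with ih | ⟨_, ⟨a, ha, c, hc, rfl⟩, d, hd, rfl⟩
      · exact ⟨x + 0, Set.add_mem_add (single h) (zero_mem _), y, ih, by rw [add_zero]⟩
      · exact ⟨x + (a + c),
          Set.add_mem_add (single h) (add_mem (AddSubmonoid.subset_closure ha) hc),
          d, hd, by beta_reduce; abel⟩
    · rcases ih with ih | ⟨_, ⟨a, ha, c, hc, rfl⟩, d, hd, rfl⟩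
      · exact Or.inl (cons h hs ih)
      · exact Or.inr
          ⟨x + a + c, Set.add_mem_add (cons h hs ha) hc, d, hd, by beta_reduce; abel⟩

end PathSum

open PathSum in
/-- Kleene's decomposition of a path at its visits to the new intermediate state `r`. -/
theorem setOf_pathSum_insert (S : Q → Q → Set M) (T : Set Q) (p q r : Q) :
    {x | PathSum S (insert r T) p q x} = {x | PathSum S T p q x} ∪
      ({x | PathSum S T p r x} + (AddSubmonoid.closure {y | PathSum S T r r y} : Set M) +
        {x | PathSum S T r q x}) := by
  have hr : r ∈ insert r T := mem_insert r T
  have hT : T ⊆ insert r T := subset_insert r T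
  ext x
  refine ⟨of_insert, ?_⟩
  rintro (h | ⟨_, ⟨a, ha, c, hc, rfl⟩, d, hd, rfl⟩)
  · exact h.mono hT
  · beta_reduce
    rw [add_assoc]
    refine trans hr (ha.mono hT) (closure_loops_add hr ?_ (hd.mono hT))
    exact AddSubmonoid.closure_mono (fun y hy => PathSum.mono hy hT) hc

theorem isSemilinearSet_setOf_pathSum (hS : ∀ p q, IsSemilinearSet (S p q)) (hT : T.Finite)
    (p q : Q) : IsSemilinearSet {x | PathSum S T p q x} := by
  induction T, hT using Set.Finite.induction_on generalizing p q with
  | empty =>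
    convert hS p q using 1
    ext x
    refine ⟨fun h => ?_, PathSum.single⟩
    cases h with
    | single h => exact h
    | cons _ hr _ => exact absurd hr (notMem_empty _)
  | @insert r T _ _ ih =>
    rw [setOf_pathSum_insert]
    exact (ih p q).union (((ih p r).add (ih r r).closure).add (ih r q))

theorem PathSum.exists_fin_path (h : PathSum S T p q x) :
    ∃ (k : ℕ) (qs : Fin (k + 1) → Q) (xs : Fin k → M), qs 0 = p ∧ qs (Fin.last k) = q ∧
      (∀ i : Fin k, xs i ∈ S (qs i.castSucc) (qs i.succ)) ∧ x = ∑ i, xs i := by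
  induction h with
  | @single p q x h =>
    exact ⟨1, ![p, q], ![x], rfl, rfl, fun i => by fin_cases i; exact h, by simp⟩
  | @cons p r q x y h _ _ ih =>
    obtain ⟨k, qs, xs, rfl, rfl, hxs, rfl⟩ := ih
    refine ⟨k + 1, Fin.cons p qs, Fin.cons x xs, rfl, rfl, fun i => ?_,
      (Fin.sum_cons x xs).symm⟩
    cases i using Fin.cases with
    | zero => exact h
    | succ i => simpa [← Fin.succ_castSucc] using hxs i

theorem PathSum.univ_of_fin_path {k : ℕ} (qs : Fin (k + 2) → Q) (xs : Fin (k + 1) → M)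
    (hxs : ∀ i : Fin (k + 1), xs i ∈ S (qs i.castSucc) (qs i.succ)) :
    PathSum S univ (qs 0) (qs (Fin.last (k + 1))) (∑ i, xs i) := by
  induction k with
  | zero => simpa using single (hxs 0)
  | succ k ih =>
    rw [Fin.sum_univ_succ]
    refine cons (hxs 0) (mem_univ _) ?_
    simpa using ih (fun i => qs i.succ) (fun i => xs i.succ) fun i => by
      simpa [← Fin.succ_castSucc] using hxs i.succ

theorem setOf_exists_fin_path_eq (I F : Set Q) :
    {x | ∃ (k : ℕ) (qs : Fin (k + 1) → Q) (xs : Fin k → M),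
        qs 0 ∈ I ∧ qs (Fin.last k) ∈ F ∧
        (∀ i : Fin k, xs i ∈ S (qs i.castSucc) (qs i.succ)) ∧ x = ∑ i, xs i} =
      (⋃ p ∈ I ∩ F, {0}) ∪ ⋃ p ∈ I, ⋃ q ∈ F, {x | PathSum S univ p q x} := by
  ext x
  simp only [mem_ofPred_eq, mem_iUnion, mem_union, mem_inter_iff, mem_singleton_iff, exists_prop]
  constructor
  · rintro ⟨_ | k, qs, xs, hI, hF, hxs, rfl⟩
    · exact Or.inl ⟨_, ⟨hI, hF⟩, by simp⟩
    · exact Or.inr ⟨_, hI, _, hF, PathSum.univ_of_fin_path qs xs hxs⟩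
  · rintro (⟨p, ⟨hI, hF⟩, rfl⟩ | ⟨p, hp, q, hq, h⟩)
    · exact ⟨0, fun _ => p, fun i => i.elim0, hI, hF, fun i => i.elim0, by simp⟩
    · obtain ⟨k, qs, xs, rfl, rfl, hxs, rfl⟩ := h.exists_fin_path
      exact ⟨k, qs, xs, hp, hq, hxs, rfl⟩

end PathSums

/-- Values obtained by summing, along a path of states from `I` to `F`,
elements of the semilinear sets attached to consecutive pairs of states,
form a semilinear set. -/
theorem isSemilinearSet_path_sums
    {n : ℕ} {Q : Type} [Fintype Q] (I F : Set Q)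
    (S : Q → Q → Set (Fin n → ℤ))
    (hS : ∀ p q, IsSemilinearSetZ (S p q)) :
    IsSemilinearSetZ
      {x | ∃ (k : ℕ) (q : Fin (k + 1) → Q) (xs : Fin k → (Fin n → ℤ)),
            q 0 ∈ I ∧ q (Fin.last k) ∈ F ∧
            (∀ i : Fin k, xs i ∈ S (q i.castSucc) (q i.succ)) ∧
            x = ∑ i, xs i} := by
  rw [isSemilinearSetZ_iff, setOf_exists_fin_path_eq]
  have hS' p q : IsSemilinearSet (S p q) := isSemilinearSetZ_iff.1 (hS p q)
  exact (IsSemilinearSet.biUnion (I ∩ F).toFinite fun _ _ => .singleton 0).union <|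
    .biUnion I.toFinite fun p _ => .biUnion F.toFinite fun q _ =>
      isSemilinearSet_setOf_pathSum hS' finite_univ p q
end
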